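/- arXiv:1711.11392 — 2 statements merged into one kernel-verified Lean document; each statement's English description precedes it below -/
import Mathlib

section
/- Let γ, κ, λ > 0 and η ∈ (0, 1]. If λ ≥ (3/2) · min(γ, κ)/η², then q₀(λ, γ, κ) ≤ η. That is, in a two-sided FIFO queue with flow balance (equal buyer and seller arrival rates λ) and exponential abandonment rates κ for buyers and γ for sellers, a flow lower bound of λ ≥ (3/2)·min(γ,κ)/η² guarantees abandonment probability at most η. -/
/-!
Only the smaller abandonment rate matters: with `c = min(γ, κ)/λ ≤ 2η²/3`, the series defining
`1/q₀ - 1` dominates `∑ₙ Pₙ(c)`. The Weierstrass product inequality gives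
`Pₙ(c) ≥ 1 - c·n(n+1)/2`, so the first `N` terms add up to at least `N - c·N(N+1)(N+2)/6`, and
the choice `N = ⌊7/(5η)⌋` makes this at least `1/η - 1`.
-/

/-- Partial product `P n c = ∏_{j=1}^{n} 1/(1 + j·c)`, with `P 0 c = 1`. -/
noncomputable def partialProd (n : ℕ) (c : ℝ) : ℝ :=
  ∏ j ∈ Finset.Icc 1 n, (1 + (j : ℝ) * c)⁻¹

/-- The empty-queue (abandonment) probability of the balanced two-sided FIFO
queue with arrival rate `λ` and abandonment rates `γ` (sellers), `κ` (buyers):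
`q₀(λ, γ, κ) = (1 + ∑_{n=1}^∞ [P_n(γ/λ) + P_n(κ/λ)])⁻¹`. -/
noncomputable def q0 (lam gam kap : ℝ) : ℝ :=
  (1 + ∑' n : ℕ, (partialProd (n + 1) (gam / lam) + partialProd (n + 1) (kap / lam)))⁻¹

theorem Finset.one_sub_sum_le_prod_inv_one_add {ι : Type*} (s : Finset ι) {f : ι → ℝ}
    (hf : ∀ i ∈ s, 0 ≤ f i) : 1 - ∑ i ∈ s, f i ≤ ∏ i ∈ s, (1 + f i)⁻¹ := by
  classical
  induction s using Finset.induction_on with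
  | empty => simp
  | insert a s ha ih =>
    have hfa : 0 ≤ f a := hf a (Finset.mem_insert_self a s)
    have hfs : ∀ i ∈ s, 0 ≤ f i := fun i hi => hf i (Finset.mem_insert_of_mem hi)
    have hsum : 0 ≤ ∑ i ∈ s, f i := Finset.sum_nonneg hfs
    rw [Finset.sum_insert ha, Finset.prod_insert ha, inv_mul_eq_div, le_div_iff₀ (by positivity)]
    nlinarith [ih hfs, mul_nonneg hfa hsum, mul_nonneg hfa hfa]

theorem sum_Icc_one_natCast (n : ℕ) : ∑ j ∈ Finset.Icc 1 n, (j : ℝ) = n * (n + 1) / 2 := by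
  induction n with
  | zero => simp
  | succ n ih =>
    rw [Finset.sum_Icc_succ_top (by omega), ih]
    push_cast
    ring

namespace partialProd

variable {c : ℝ}

theorem pos (hc : 0 ≤ c) (n : ℕ) : 0 < partialProd n c :=
  Finset.prod_pos fun j _ => by positivity

theorem le_pow (hc : 0 ≤ c) (n : ℕ) : partialProd n c ≤ (1 + c)⁻¹ ^ n := by
  calc partialProd n c ≤ ∏ _j ∈ Finset.Icc 1 n, (1 + c)⁻¹ := by
        refine Finset.prod_le_prod (fun j _ => by positivity) fun j hj => ?_
        have hj : (1 : ℝ) ≤ j := by exact_mod_cast (Finset.mem_Icc.mp hj).1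
        gcongr
        exact le_mul_of_one_le_left hc hj
    _ = (1 + c)⁻¹ ^ n := by simp

theorem summable_succ (hc : 0 < c) : Summable fun n : ℕ => partialProd (n + 1) c := by
  have hgeom : Summable fun n : ℕ => (1 + c)⁻¹ ^ n :=
    summable_geometric_of_lt_one (by positivity) (inv_lt_one_of_one_lt₀ (by linarith))
  exact (Summable.of_nonneg_of_le (fun n => (pos hc.le n).le) (le_pow hc.le) hgeom).comp_injective
    (add_left_injective 1)

theorem one_sub_mul_le (hc : 0 ≤ c) (n : ℕ) : 1 - c * (n * (n + 1) / 2) ≤ partialProd n c := by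
  have h := Finset.one_sub_sum_le_prod_inv_one_add (Finset.Icc 1 n) (f := fun j : ℕ => (j : ℝ) * c)
    fun j _ => by positivity
  rwa [← Finset.sum_mul, sum_Icc_one_natCast, mul_comm] at h

theorem sub_mul_le_sum_range (hc : 0 ≤ c) (N : ℕ) :
    N - c * (N * (N + 1) * (N + 2) / 6) ≤ ∑ n ∈ Finset.range N, partialProd (n + 1) c := by
  induction N with
  | zero => simp
  | succ N ih =>
    rw [Finset.sum_range_succ]
    have h := one_sub_mul_le hc (N + 1)
    push_cast at h ⊢
    linarith

theorem min_le_add {a b : ℝ} (ha : 0 ≤ a) (hb : 0 ≤ b) (n : ℕ) :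
    partialProd n (min a b) ≤ partialProd n a + partialProd n b := by
  rcases min_choice a b with h | h <;> rw [h]
  · linarith [pos hb n]
  · linarith [pos ha n]

end partialProd

theorem one_div_sub_one_le_of_floor_window {η x : ℝ} (hη0 : 0 < η) (hη1 : η ≤ 1)
    (hxle : 5 * η * x ≤ 7) (hxgt : 7 < 5 * η * (x + 1)) :
    1 / η - 1 ≤ x - 2 / 3 * η ^ 2 * (x * (x + 1) * (x + 2) / 6) := by
  rw [div_sub' hη0.ne', div_le_iff₀ hη0]
  nlinarith [mul_nonneg (sub_nonneg.mpr hxle) hη0.le, mul_le_of_le_one_left hη0.le hη1,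
    sq_nonneg (η * x - 7 / 5), sq_nonneg (η - 1), mul_pos hη0 hη0]

theorem one_div_sub_one_le_tsum_partialProd {η c : ℝ} (hη : η ∈ Set.Ioc (0 : ℝ) 1) (hc0 : 0 < c)
    (hc : c ≤ 2 / 3 * η ^ 2) : 1 / η - 1 ≤ ∑' n : ℕ, partialProd (n + 1) c := by
  obtain ⟨hη0, hη1⟩ := hη
  set N := ⌊7 / (5 * η)⌋₊
  have h5η : 0 < 5 * η := by positivity
  have hNle : 5 * η * N ≤ 7 := by
    rw [mul_comm, ← le_div_iff₀ h5η]; exact Nat.floor_le (by positivity)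
  have hNgt : 7 < 5 * η * (N + 1) := by
    rw [mul_comm, ← div_lt_iff₀ h5η]; exact Nat.lt_floor_add_one _
  calc 1 / η - 1 ≤ N - 2 / 3 * η ^ 2 * (N * (N + 1) * (N + 2) / 6) :=
        one_div_sub_one_le_of_floor_window hη0 hη1 hNle hNgt
    _ ≤ N - c * (N * (N + 1) * (N + 2) / 6) := by gcongr
    _ ≤ ∑ n ∈ Finset.range N, partialProd (n + 1) c := partialProd.sub_mul_le_sum_range hc0.le N
    _ ≤ ∑' n : ℕ, partialProd (n + 1) c :=
        Summable.sum_le_tsum _ (fun n _ => (partialProd.pos hc0.le _).le)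
          (partialProd.summable_succ hc0)

/-- if `λ ≥ (3/2)·min(γ,κ)/η²`, then the abandonment probability
`q₀(λ, γ, κ)` is at most `η`. -/
theorem statement7 (lam gam kap η : ℝ) (hlam : 0 < lam) (hgam : 0 < gam) (hkap : 0 < kap)
    (hη : η ∈ Set.Ioc (0 : ℝ) 1)
    (hflow : lam ≥ 3 / 2 * min gam kap / η ^ 2) :
    q0 lam gam kap ≤ η := by
  have hγ : 0 < gam / lam := div_pos hgam hlam
  have hκ : 0 < kap / lam := div_pos hkap hlam
  have hc : min (gam / lam) (kap / lam) ≤ 2 / 3 * η ^ 2 := by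
    rw [ge_iff_le, div_le_iff₀ (pow_pos hη.1 2)] at hflow
    rw [min_div_div_right hlam.le, div_le_iff₀ hlam]
    linarith
  have hS : 1 / η - 1 ≤
      ∑' n : ℕ, (partialProd (n + 1) (gam / lam) + partialProd (n + 1) (kap / lam)) :=
    (one_div_sub_one_le_tsum_partialProd hη (lt_min hγ hκ) hc).trans <|
      Summable.tsum_le_tsum (fun n => partialProd.min_le_add hγ.le hκ.le _)
        (partialProd.summable_succ (lt_min hγ hκ))
        ((partialProd.summable_succ hγ).add (partialProd.summable_succ hκ))
  have hη_inv : 0 < 1 / η := one_div_pos.mpr hη.1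
  rw [q0, inv_le_comm₀ (by linarith) hη.1, ← one_div]
  linarith
end

section
/- Let γ, κ, λ > 0 with min(γ, κ)/λ ≥ 1. Then q₀(λ, γ, κ) ≥ 1/(2(e − 1)), and in particular q₀(λ, γ, κ) > 1/6; hence an abandonment probability of at most η ≤ 1/6 in the balanced two-sided FIFO queue is impossible when the arrival rate λ is at most min(γ, κ). -/
open Nat Real

lemma partialProd_succ (n : ℕ) (c : ℝ) :
    partialProd (n + 1) c = partialProd n c * (1 + ((n : ℝ) + 1) * c)⁻¹ := by
  rw [partialProd, Finset.prod_Icc_succ_top (by omega), partialProd]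
  push_cast
  rfl

lemma partialProd_nonneg {c : ℝ} (hc : 0 ≤ c) (n : ℕ) : 0 ≤ partialProd n c :=
  Finset.prod_nonneg fun _ _ => by positivity

lemma partialProd_le_inv_factorial {c : ℝ} (hc : 1 ≤ c) (n : ℕ) :
    partialProd n c ≤ ((n + 1)! : ℝ)⁻¹ := by
  induction n with
  | zero => simp [partialProd]
  | succ n ih =>
    have hfactor : (1 + ((n : ℝ) + 1) * c)⁻¹ ≤ ((n : ℝ) + 2)⁻¹ :=
      inv_anti₀ (by positivity) (by nlinarith)
    calc partialProd (n + 1) c = partialProd n c * (1 + ((n : ℝ) + 1) * c)⁻¹ :=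
          partialProd_succ n c
      _ ≤ ((n + 1)! : ℝ)⁻¹ * ((n : ℝ) + 2)⁻¹ :=
          mul_le_mul ih hfactor (by positivity) (by positivity)
      _ = ((n + 1 + 1)! : ℝ)⁻¹ := by
          rw [Nat.factorial_succ (n + 1), Nat.cast_mul, mul_inv, mul_comm]
          push_cast
          ring

lemma hasSum_inv_factorial_add_two :
    HasSum (fun n : ℕ => ((n + 2)! : ℝ)⁻¹) (exp 1 - 2) := by
  have hexp : HasSum (fun n : ℕ => (n ! : ℝ)⁻¹) (exp 1) := by
    simpa [Real.exp_eq_exp_ℝ] using NormedSpace.expSeries_div_hasSum_exp (1 : ℝ)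
  have hhead : ∑ i ∈ Finset.range 2, (i ! : ℝ)⁻¹ = 2 := by
    norm_num [Finset.sum_range_succ]
  simpa [hhead] using (hasSum_nat_add_iff' 2).2 hexp

lemma summable_partialProd_succ {c : ℝ} (hc : 1 ≤ c) :
    Summable fun n : ℕ => partialProd (n + 1) c :=
  hasSum_inv_factorial_add_two.summable.of_nonneg_of_le
    (fun n => partialProd_nonneg (by linarith) _) (fun n => partialProd_le_inv_factorial hc _)

lemma tsum_partialProd_succ_le {c : ℝ} (hc : 1 ≤ c) :
    ∑' n : ℕ, partialProd (n + 1) c ≤ exp 1 - 2 :=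
  hasSum_le (fun n => partialProd_le_inv_factorial hc (n + 1))
    (summable_partialProd_succ hc).hasSum hasSum_inv_factorial_add_two

lemma one_div_two_mul_exp_one_sub_one_le_q0 {lam gam kap : ℝ}
    (hgam : 1 ≤ gam / lam) (hkap : 1 ≤ kap / lam) :
    1 / (2 * (exp 1 - 1)) ≤ q0 lam gam kap := by
  have htsum := (summable_partialProd_succ hgam).tsum_add (summable_partialProd_succ hkap)
  have hnonneg :
      0 ≤ ∑' n : ℕ, (partialProd (n + 1) (gam / lam) + partialProd (n + 1) (kap / lam)) :=
    tsum_nonneg fun n => add_nonneg (partialProd_nonneg (by linarith) _)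
      (partialProd_nonneg (by linarith) _)
  rw [q0, one_div]
  refine inv_anti₀ (by linarith) ?_
  linarith [tsum_partialProd_succ_le hgam, tsum_partialProd_succ_le hkap]

theorem statement13_general (lam gam kap : ℝ) (hlam : 0 < lam)
    (hc : 1 ≤ min gam kap / lam) :
    1 / (2 * (Real.exp 1 - 1)) ≤ q0 lam gam kap ∧ 1 / 6 < q0 lam gam kap := by
  have hgam : 1 ≤ gam / lam := hc.trans (by gcongr; exact min_le_left _ _)
  have hkap : 1 ≤ kap / lam := hc.trans (by gcongr; exact min_le_right _ _)
  have hq := one_div_two_mul_exp_one_sub_one_le_q0 hgam hkap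
  have he : exp 1 < 2.7182818286 := exp_one_lt_d9
  have he' : 1 < exp 1 := by linarith [exp_one_gt_d9]
  exact ⟨hq, (one_div_lt_one_div_of_lt (by linarith) (by linarith)).trans_le hq⟩

/-- if `min(γ,κ)/λ ≥ 1`, then `q₀(λ, γ, κ) ≥ 1/(2(e − 1))`,
and in particular `q₀(λ, γ, κ) > 1/6`; hence abandonment probability at most
`η ≤ 1/6` is impossible when `λ ≤ min(γ, κ)`. -/
theorem statement13 (lam gam kap : ℝ) (hlam : 0 < lam) (hgam : 0 < gam) (hkap : 0 < kap)
    (hc : 1 ≤ min gam kap / lam) :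
    1 / (2 * (Real.exp 1 - 1)) ≤ q0 lam gam kap ∧ 1 / 6 < q0 lam gam kap :=
  statement13_general lam gam kap hlam hc
end
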